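/- arXiv:1706.00953 — 2 statements merged into one kernel-verified Lean document; each statement's English description precedes it below -/
import Mathlib

section
/- For every n ≥ 1 and every admissible sequence (j_1,…,j_n), the ROE cylinder Δ_{j_1…j_n} is, up to a λ-null set, the open interval whose infimum is Σ_{m=1}^{n} (∏_{i=1}^{m−1} a_i(j_i)/b_i(j_i)) · (1/j_m) and whose supremum is Σ_{m=1}^{n−1} (∏_{i=1}^{m−1} a_i(j_i)/b_i(j_i)) · (1/j_m) + (∏_{i=1}^{n−1} a_i(j_i)/b_i(j_i)) · (1/(j_n − 1)). -/
/-!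
Unwinding the algorithm, `x = Σ_{m<k} w_m / d_m + w_k · x_k` as long as `x_0, …, x_{k-1} ∈ (0,1)`,
where `w_m = ∏_{i<m} a_i(d_i)/b_i(d_i)` (indices from `0`). Since `x_k ∈ (1/d_k, 1/(d_k - 1)]`,
every point of the cylinder lies in the half-open interval `(inf, sup]`. Conversely, the identity
`(a/b)/h = 1/(j-1) - 1/j` and admissibility make the right endpoints decrease with the rank, so
every point of the open interval has the prescribed digits. Such a point outside the cylinder has
a finite expansion: some `x_{k+1}` equals `1`, which together with `d_0, …, d_k` determines `x`,
so there are only countably many of them.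
-/

open MeasureTheory Set

namespace ROE

/-- The `x`-sequence of the restricted Oppenheim algorithm applied to `x`:
index `k` corresponds to the paper's `x_{k+1}`, and `a k`, `b k` correspond to the paper's
`a_{k+1}`, `b_{k+1}`.  So `X a b x 0 = x₁ = x` and
`x_{k+2} = (b_{k+1}(d_{k+1})/a_{k+1}(d_{k+1})) · (x_{k+1} - 1/d_{k+1})`. -/
noncomputable def X (a b : ℕ → ℕ → ℕ) (x : ℝ) : ℕ → ℝ
  | 0 => x
  | k + 1 =>
      let xk := X a b x k
      let d : ℕ := (⌊1 / xk⌋).toNat + 1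
      ((b k d : ℝ) / (a k d : ℝ)) * (xk - 1 / (d : ℝ))

/-- The digit `d_{k+1}(x) = ⌊1/x_{k+1}⌋ + 1` of the restricted Oppenheim expansion. -/
noncomputable def D (a b : ℕ → ℕ → ℕ) (x : ℝ) (k : ℕ) : ℕ :=
  (⌊1 / X a b x k⌋).toNat + 1

/-- The restricted Oppenheim expansion of `x` is infinite: all `x_n` lie in `(0,1)`. -/
def InfiniteROE (a b : ℕ → ℕ → ℕ) (x : ℝ) : Prop :=
  ∀ k, X a b x k ∈ Set.Ioo (0 : ℝ) 1

/-- The finite sequence `(j 0, …, j (n-1))` (the paper's `(j_1, …, j_n)`) is admissible: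
`j_1 ≥ 2` and `j_{i+1} > h_i(j_i)`.  Here `h i` corresponds to the paper's `h_{i+1}`. -/
def Admissible (h : ℕ → ℕ → ℕ) (n : ℕ) (j : ℕ → ℕ) : Prop :=
  2 ≤ j 0 ∧ ∀ i, i + 1 < n → h i (j i) < j (i + 1)

/-- The cylinder of rank `n` with base `(j 0, …, j (n-1))`: the set of `x ∈ (0,1)` with
infinite ROE whose first `n` digits are `j 0, …, j (n-1)`. -/
def cylinder (a b : ℕ → ℕ → ℕ) (n : ℕ) (j : ℕ → ℕ) : Set ℝ :=
  {x | x ∈ Set.Ioo (0 : ℝ) 1 ∧ InfiniteROE a b x ∧ ∀ i < n, D a b x i = j i}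

/-- The difference-ROE digit `α_{k+1}(x)`: `α₁ = d₁ - 1`, `α_{k+2} = d_{k+2} - h_{k+1}(d_{k+1})`. -/
noncomputable def alpha (a b h : ℕ → ℕ → ℕ) (x : ℝ) : ℕ → ℕ
  | 0 => D a b x 0 - 1
  | k + 1 => D a b x (k + 1) - h k (D a b x k)

/-- The digit sequence `d` reconstructed from a sequence `α` of difference-ROE symbols:
`d₁ = α₁ + 1`, `d_{k+2} = h_{k+1}(d_{k+1}) + α_{k+2}`. -/
def dSeq (h : ℕ → ℕ → ℕ) (α : ℕ → ℕ) : ℕ → ℕ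
  | 0 => α 0 + 1
  | k + 1 => h k (dSeq h α k) + α (k + 1)

/-- The real number whose difference-ROE digits are `(α k)`:
`Φ(α) = Σ_{n≥1} (∏_{i=1}^{n-1} a_i(d_i)/b_i(d_i)) · (1/d_n)`. -/
noncomputable def Phi (a b h : ℕ → ℕ → ℕ) (α : ℕ → ℕ) : ℝ :=
  ∑' n : ℕ, (∏ i ∈ Finset.range n, (a i (dSeq h α i) : ℝ) / (b i (dSeq h α i) : ℝ)) *
    (1 / (dSeq h α n : ℝ))

lemma X_succ (a b : ℕ → ℕ → ℕ) (x : ℝ) (k : ℕ) :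
    X a b x (k + 1) = (b k (D a b x k) : ℝ) / a k (D a b x k) * (X a b x k - 1 / D a b x k) :=
  rfl

lemma toNat_floor_one_div_add_one_eq_iff {y : ℝ} (hy : 0 < y) {j : ℕ} (hj : 2 ≤ j) :
    (⌊1 / y⌋).toNat + 1 = j ↔ 1 / (j : ℝ) < y ∧ y ≤ 1 / ((j : ℝ) - 1) := by
  have hj' : (1 : ℝ) < j := by exact_mod_cast hj
  rw [one_div_lt (by positivity) hy, le_one_div hy (by linarith), and_comm,
    show (⌊1 / y⌋).toNat + 1 = j ↔ ⌊1 / y⌋ = (j : ℤ) - 1 by omega, Int.floor_eq_iff]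
  push_cast
  rw [sub_add_cancel]

lemma two_le_toNat_floor_one_div_add_one {y : ℝ} (hy : y ∈ Ioo (0 : ℝ) 1) :
    2 ≤ (⌊1 / y⌋).toNat + 1 := by
  have : (1 : ℤ) ≤ ⌊1 / y⌋ := Int.le_floor.mpr (by exact_mod_cast (one_lt_one_div hy.1 hy.2).le)
  omega

lemma one_div_sub_one_le_one {j : ℕ} (hj : 2 ≤ j) : 1 / ((j : ℝ) - 1) ≤ 1 := by
  have : (2 : ℝ) ≤ j := by exact_mod_cast hj
  rw [div_le_one (by linarith)]
  linarith

lemma pos_and_pos_of_mul_eq {a b h j : ℕ} (ha : 0 < a) (hj : 2 ≤ j)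
    (hab : b * h = a * j * (j - 1)) : 0 < b ∧ 0 < h := by
  have hbh : 0 < b * h := hab ▸ Nat.mul_pos (Nat.mul_pos ha (by omega)) (by omega)
  exact ⟨Nat.pos_of_mul_pos_right hbh, Nat.pos_of_mul_pos_left hbh⟩

lemma div_div_eq_one_div_sub_one_sub_one_div {a b h j : ℕ} (ha : 0 < a) (hj : 2 ≤ j)
    (hab : b * h = a * j * (j - 1)) :
    (a : ℝ) / b / h = 1 / ((j : ℝ) - 1) - 1 / j := by
  obtain ⟨hb, hh⟩ := pos_and_pos_of_mul_eq ha hj hab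
  have hab' : (b : ℝ) * h = a * j * (j - 1) := by
    have := congrArg (Nat.cast (R := ℝ)) hab
    push_cast [Nat.cast_sub (by omega : 1 ≤ j)] at this
    exact this
  have : (2 : ℝ) ≤ j := by exact_mod_cast hj
  have : (j : ℝ) - 1 ≠ 0 := by linarith
  rw [div_div, hab']
  field_simp
  ring

section Development

variable {a b h : ℕ → ℕ → ℕ} {j : ℕ → ℕ} {n : ℕ}

lemma b_pos_of_mul_eq (ha : ∀ k j, 2 ≤ j → 0 < a k j)
    (hab : ∀ k j, 2 ≤ j → b k j * h k j = a k j * j * (j - 1)) : ∀ k j, 2 ≤ j → 0 < b k j :=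
  fun k j hj => (pos_and_pos_of_mul_eq (ha k j hj) hj (hab k j hj)).1

lemma X_succ_mem_Ioc (ha : ∀ k j, 2 ≤ j → 0 < a k j)
    (hab : ∀ k j, 2 ≤ j → b k j * h k j = a k j * j * (j - 1)) {x : ℝ} {k : ℕ}
    (hx : X a b x k ∈ Ioo (0 : ℝ) 1) : X a b x (k + 1) ∈ Ioc (0 : ℝ) 1 := by
  set d := D a b x k
  have hd : 2 ≤ d := two_le_toNat_floor_one_div_add_one hx
  obtain ⟨hlo, hhi⟩ := (toNat_floor_one_div_add_one_eq_iff hx.1 hd).1 rfl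
  obtain ⟨hb, hh⟩ := pos_and_pos_of_mul_eq (ha k d hd) hd (hab k d hd)
  have hA : (0 : ℝ) < a k d := by exact_mod_cast ha k d hd
  have hB : (0 : ℝ) < b k d := by exact_mod_cast hb
  have hH : (1 : ℝ) ≤ h k d := by exact_mod_cast hh
  rw [X_succ]
  refine ⟨mul_pos (div_pos hB hA) (sub_pos.2 hlo), ?_⟩
  calc (b k d : ℝ) / a k d * (X a b x k - 1 / d)
      ≤ b k d / a k d * (1 / (d - 1) - 1 / d) := by gcongr
    _ = 1 / h k d := by
      rw [← div_div_eq_one_div_sub_one_sub_one_div (ha k d hd) hd (hab k d hd)]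
      field_simp
    _ ≤ 1 := by rw [div_le_one (by linarith)]; exact hH

lemma X_eq_one_div_add (ha : ∀ k j, 2 ≤ j → 0 < a k j) (hb : ∀ k j, 2 ≤ j → 0 < b k j)
    {x : ℝ} {k : ℕ} (hx : X a b x k ∈ Ioo (0 : ℝ) 1) :
    X a b x k = 1 / D a b x k + a k (D a b x k) / b k (D a b x k) * X a b x (k + 1) := by
  have hd := two_le_toNat_floor_one_div_add_one hx
  have hA : (a k (D a b x k) : ℝ) ≠ 0 := by exact_mod_cast (ha k _ hd).ne'
  have hB : (b k (D a b x k) : ℝ) ≠ 0 := by exact_mod_cast (hb k _ hd).ne'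
  rw [X_succ]
  field_simp
  ring

noncomputable def weight (a b : ℕ → ℕ → ℕ) (j : ℕ → ℕ) (m : ℕ) : ℝ :=
  ∏ i ∈ Finset.range m, (a i (j i) : ℝ) / (b i (j i) : ℝ)

noncomputable def cylinderInf (a b : ℕ → ℕ → ℕ) (j : ℕ → ℕ) (n : ℕ) : ℝ :=
  ∑ m ∈ Finset.range n, weight a b j m * (1 / (j m : ℝ))

noncomputable def cylinderSup (a b : ℕ → ℕ → ℕ) (j : ℕ → ℕ) (n : ℕ) : ℝ :=
  cylinderInf a b j (n - 1) + weight a b j (n - 1) * (1 / ((j (n - 1) : ℝ) - 1))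

lemma weight_succ (k : ℕ) :
    weight a b j (k + 1) = weight a b j k * ((a k (j k) : ℝ) / b k (j k)) :=
  Finset.prod_range_succ _ _

lemma weight_nonneg (k : ℕ) : 0 ≤ weight a b j k :=
  Finset.prod_nonneg fun _ _ => by positivity

lemma weight_pos (ha : ∀ k j, 2 ≤ j → 0 < a k j) (hb : ∀ k j, 2 ≤ j → 0 < b k j) {k : ℕ}
    (hj : ∀ i < k, 2 ≤ j i) : 0 < weight a b j k :=
  Finset.prod_pos fun i hi => by
    have hi := hj i (Finset.mem_range.1 hi)
    exact div_pos (by exact_mod_cast ha i _ hi) (by exact_mod_cast hb i _ hi)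

lemma cylinderInf_succ (k : ℕ) :
    cylinderInf a b j (k + 1) = cylinderInf a b j k + weight a b j k * (1 / (j k : ℝ)) :=
  Finset.sum_range_succ _ _

lemma cylinderInf_mono : Monotone (cylinderInf a b j) := fun _ _ hmn =>
  Finset.sum_le_sum_of_subset_of_nonneg (Finset.range_subset_range.2 hmn)
    fun _ _ _ => mul_nonneg (weight_nonneg _) (by positivity)

lemma cylinderSup_succ (k : ℕ) :
    cylinderSup a b j (k + 1) = cylinderInf a b j k + weight a b j k * (1 / ((j k : ℝ) - 1)) :=
  rfl

lemma cylinderSup_succ_succ_le (ha : ∀ k j, 2 ≤ j → 0 < a k j)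
    (hab : ∀ k j, 2 ≤ j → b k j * h k j = a k j * j * (j - 1)) {k : ℕ} (hj : 2 ≤ j k)
    (hjk : h k (j k) < j (k + 1)) : cylinderSup a b j (k + 2) ≤ cylinderSup a b j (k + 1) := by
  have hh : (0 : ℝ) < h k (j k) := by
    exact_mod_cast (pos_and_pos_of_mul_eq (ha k _ hj) hj (hab k _ hj)).2
  have hjk : (h k (j k) : ℝ) ≤ j (k + 1) - 1 := by
    have : (h k (j k) : ℝ) + 1 ≤ j (k + 1) := by exact_mod_cast hjk
    linarith
  rw [cylinderSup_succ, cylinderSup_succ, cylinderInf_succ, weight_succ, add_assoc, mul_assoc,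
    ← mul_add]
  gcongr _ + _ * ?_
  · exact weight_nonneg k
  calc 1 / (j k : ℝ) + a k (j k) / b k (j k) * (1 / (j (k + 1) - 1))
      ≤ 1 / j k + a k (j k) / b k (j k) / h k (j k) := by
        rw [div_eq_mul_one_div _ (h k (j k) : ℝ)]
        gcongr
    _ = 1 / (j k - 1) := by
        rw [div_div_eq_one_div_sub_one_sub_one_div (ha k _ hj) hj (hab k _ hj)]
        ring

lemma Admissible.two_le (ha : ∀ k j, 2 ≤ j → 0 < a k j)
    (hab : ∀ k j, 2 ≤ j → b k j * h k j = a k j * j * (j - 1)) (hadm : Admissible h n j) :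
    ∀ i < n, 2 ≤ j i
  | 0, _ => hadm.1
  | i + 1, hi => by
    have hji := hadm.two_le ha hab i (by omega)
    have := (pos_and_pos_of_mul_eq (ha i _ hji) hji (hab i _ hji)).2
    have := hadm.2 i hi
    omega

lemma Admissible.cylinderSup_le (ha : ∀ k j, 2 ≤ j → 0 < a k j)
    (hab : ∀ k j, 2 ≤ j → b k j * h k j = a k j * j * (j - 1)) (hadm : Admissible h n j)
    {k : ℕ} (hk : k + 1 ≤ n) : cylinderSup a b j n ≤ cylinderSup a b j (k + 1) := by
  induction n, hk using Nat.le_induction with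
  | base => exact le_rfl
  | succ m hm ih =>
    obtain ⟨m, rfl⟩ : ∃ m', m = m' + 1 := ⟨m - 1, by omega⟩
    have hadm' : Admissible h (m + 1) j := ⟨hadm.1, fun i hi => hadm.2 i (by omega)⟩
    exact (cylinderSup_succ_succ_le ha hab (hadm.two_le ha hab m (by omega))
      (hadm.2 m (by omega))).trans (ih hadm')

lemma eq_cylinderInf_add_weight_mul_X (ha : ∀ k j, 2 ≤ j → 0 < a k j)
    (hb : ∀ k j, 2 ≤ j → 0 < b k j) {x : ℝ} {k : ℕ} (hX : ∀ i < k, X a b x i ∈ Ioo (0 : ℝ) 1)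
    (hD : ∀ i < k, D a b x i = j i) : x = cylinderInf a b j k + weight a b j k * X a b x k := by
  induction k with
  | zero => simp [cylinderInf, weight, X]
  | succ k ih =>
    calc x = cylinderInf a b j k + weight a b j k * X a b x k :=
          ih (fun i hi => hX i (by omega)) (fun i hi => hD i (by omega))
      _ = cylinderInf a b j (k + 1) + weight a b j (k + 1) * X a b x (k + 1) := by
        rw [X_eq_one_div_add ha hb (hX k (by omega)), hD k (by omega), cylinderInf_succ,
          weight_succ]
        ring

lemma cylinder_subset_Ioc (ha : ∀ k j, 2 ≤ j → 0 < a k j) (hb : ∀ k j, 2 ≤ j → 0 < b k j)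
    (k : ℕ) :
    cylinder a b (k + 1) j ⊆ Ioc (cylinderInf a b j (k + 1)) (cylinderSup a b j (k + 1)) := by
  rintro x ⟨-, hX, hD⟩
  have hx := eq_cylinderInf_add_weight_mul_X (k := k) ha hb (fun i _ => hX i)
    (fun i hi => hD i (by omega))
  have hW : 0 < weight a b j k := weight_pos ha hb fun i hi =>
    hD i (by omega) ▸ two_le_toNat_floor_one_div_add_one (hX i)
  obtain ⟨hlo, hhi⟩ := (toNat_floor_one_div_add_one_eq_iff (hX k).1
    (hD k (by omega) ▸ two_le_toNat_floor_one_div_add_one (hX k))).1 (hD k (by omega))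
  rw [cylinderInf_succ, cylinderSup_succ, hx]
  exact ⟨by gcongr, by gcongr⟩

lemma X_mem_Ioo_and_D_eq_of_mem_Ioo (ha : ∀ k j, 2 ≤ j → 0 < a k j)
    (hab : ∀ k j, 2 ≤ j → b k j * h k j = a k j * j * (j - 1)) (hadm : Admissible h n j)
    {x : ℝ} (hx : x ∈ Ioo (cylinderInf a b j n) (cylinderSup a b j n)) :
    ∀ k < n, X a b x k ∈ Ioo (0 : ℝ) 1 ∧ D a b x k = j k := by
  have hb := b_pos_of_mul_eq ha hab
  refine fun k => Nat.strong_induction_on k fun k ih hk => ?_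
  have hj := hadm.two_le ha hab
  have hW : 0 < weight a b j k := weight_pos ha hb fun i hi => hj i (by omega)
  have hx' := eq_cylinderInf_add_weight_mul_X ha hb (fun i hi => (ih i hi (by omega)).1)
    (fun i hi => (ih i hi (by omega)).2)
  have hlo : 1 / (j k : ℝ) < X a b x k := by
    have := (cylinderInf_mono (by omega : k + 1 ≤ n)).trans_lt hx.1
    rw [cylinderInf_succ, hx'] at this
    exact lt_of_mul_lt_mul_left (lt_of_add_lt_add_left this) hW.le
  have hhi : X a b x k < 1 / ((j k : ℝ) - 1) := by
    have := hx.2.trans_le (hadm.cylinderSup_le ha hab (by omega : k + 1 ≤ n))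
    rw [cylinderSup_succ, hx'] at this
    exact lt_of_mul_lt_mul_left (lt_of_add_lt_add_left this) hW.le
  have hX0 : 0 < X a b x k := lt_trans (by have := hj k hk; positivity) hlo
  exact ⟨⟨hX0, hhi.trans_le (one_div_sub_one_le_one (hj k hk))⟩,
    (toNat_floor_one_div_add_one_eq_iff hX0 (hj k hk)).2 ⟨hlo, hhi.le⟩⟩

lemma exists_X_eq_one_of_not_infiniteROE (ha : ∀ k j, 2 ≤ j → 0 < a k j)
    (hab : ∀ k j, 2 ≤ j → b k j * h k j = a k j * j * (j - 1)) {x : ℝ}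
    (hx : x ∈ Ioo (0 : ℝ) 1) (hinf : ¬ InfiniteROE a b x) :
    ∃ k, (∀ i < k + 1, X a b x i ∈ Ioo (0 : ℝ) 1) ∧ X a b x (k + 1) = 1 := by
  classical
  have hex : ∃ m, X a b x m ∉ Ioo (0 : ℝ) 1 := by simpa [InfiniteROE] using hinf
  obtain ⟨k, hk⟩ : ∃ k, Nat.find hex = k + 1 :=
    Nat.exists_eq_add_one.2 (Nat.pos_of_ne_zero fun h0 => Nat.find_spec hex (h0 ▸ hx))
  have hbefore : ∀ i < k + 1, X a b x i ∈ Ioo (0 : ℝ) 1 := fun i hi =>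
    not_not.1 (Nat.find_min hex (hk ▸ hi))
  have hafter : X a b x (k + 1) ∉ Ioo (0 : ℝ) 1 := hk ▸ Nat.find_spec hex
  obtain ⟨hpos, hle⟩ := X_succ_mem_Ioc ha hab (hbefore k (by omega))
  exact ⟨k, hbefore, hle.eq_or_lt.resolve_right fun hlt => hafter ⟨hpos, hlt⟩⟩

lemma injOn_digits (ha : ∀ k j, 2 ≤ j → 0 < a k j) (hb : ∀ k j, 2 ≤ j → 0 < b k j) (k : ℕ) :
    InjOn (fun x (i : Fin (k + 1)) => D a b x i)
      {x | (∀ i < k + 1, X a b x i ∈ Ioo (0 : ℝ) 1) ∧ X a b x (k + 1) = 1} := by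
  rintro x ⟨hxX, hx1⟩ y ⟨hyX, hy1⟩ hxy
  have hD : ∀ i < k + 1, D a b y i = D a b x i := fun i hi => (congrFun hxy ⟨i, hi⟩).symm
  rw [eq_cylinderInf_add_weight_mul_X ha hb hxX (fun _ _ => rfl), hx1,
    eq_cylinderInf_add_weight_mul_X ha hb hyX hD, hy1]

lemma countable_setOf_not_infiniteROE (ha : ∀ k j, 2 ≤ j → 0 < a k j)
    (hab : ∀ k j, 2 ≤ j → b k j * h k j = a k j * j * (j - 1)) :
    {x : ℝ | x ∈ Ioo (0 : ℝ) 1 ∧ ¬ InfiniteROE a b x}.Countable := by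
  refine Countable.mono
    (fun x hx => mem_iUnion.2 (exists_X_eq_one_of_not_infiniteROE ha hab hx.1 hx.2))
    (countable_iUnion fun k => ?_)
  exact (mapsTo_univ _ _).countable_of_injOn (injOn_digits ha (b_pos_of_mul_eq ha hab) k)
    countable_univ

end Development

theorem cylinder_ae_eq_Ioo_general (a b h : ℕ → ℕ → ℕ)
    (ha : ∀ k j, 2 ≤ j → 0 < a k j)
    (hab : ∀ k j, 2 ≤ j → b k j * h k j = a k j * j * (j - 1))
    (n : ℕ) (hn : 1 ≤ n) (j : ℕ → ℕ) (hadm : Admissible h n j) :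
    cylinder a b n j =ᵐ[volume]
      Set.Ioo
        (∑ m ∈ Finset.range n,
          (∏ i ∈ Finset.range m, (a i (j i) : ℝ) / (b i (j i) : ℝ)) * (1 / (j m : ℝ)))
        ((∑ m ∈ Finset.range (n - 1),
          (∏ i ∈ Finset.range m, (a i (j i) : ℝ) / (b i (j i) : ℝ)) * (1 / (j m : ℝ))) +
          (∏ i ∈ Finset.range (n - 1), (a i (j i) : ℝ) / (b i (j i) : ℝ)) *
            (1 / ((j (n - 1) : ℝ) - 1))) := by
  change cylinder a b n j =ᵐ[volume] Ioo (cylinderInf a b j n) (cylinderSup a b j n)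
  obtain ⟨k, rfl⟩ : ∃ k, n = k + 1 := ⟨n - 1, by omega⟩
  have hb := b_pos_of_mul_eq ha hab
  refine Filter.EventuallyLE.antisymm ?_ ?_
  · exact (cylinder_subset_Ioc ha hb k).eventuallyLE.trans Ioo_ae_eq_Ioc.symm.le
  · refine ae_le_set.2 (measure_mono_null (fun x ⟨hx, hxc⟩ => ?_)
      ((countable_setOf_not_infiniteROE ha hab).measure_zero _))
    have hdigits := X_mem_Ioo_and_D_eq_of_mem_Ioo ha hab hadm hx
    have hx01 : x ∈ Ioo (0 : ℝ) 1 := (hdigits 0 (by omega)).1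
    exact ⟨hx01, fun hinf => hxc ⟨hx01, hinf, fun i hi => (hdigits i hi).2⟩⟩

/-- For every `n ≥ 1` and every admissible sequence `(j_1, …, j_n)`, the ROE
cylinder `Δ_{j_1…j_n}` is, up to a `λ`-null set, the open interval whose infimum is
`Σ_{m=1}^{n} (∏_{i=1}^{m-1} a_i(j_i)/b_i(j_i)) · (1/j_m)` and whose supremum is
`Σ_{m=1}^{n-1} (∏_{i=1}^{m-1} a_i(j_i)/b_i(j_i)) · (1/j_m)
  + (∏_{i=1}^{n-1} a_i(j_i)/b_i(j_i)) · (1/(j_n - 1))`. -/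
theorem cylinder_ae_eq_Ioo (a b h : ℕ → ℕ → ℕ)
    (ha : ∀ k j, 2 ≤ j → 0 < a k j) (hb : ∀ k j, 2 ≤ j → 0 < b k j)
    (hpos : ∀ k j, 2 ≤ j → 0 < h k j)
    (hab : ∀ k j, 2 ≤ j → b k j * h k j = a k j * j * (j - 1))
    (n : ℕ) (hn : 1 ≤ n) (j : ℕ → ℕ) (hadm : Admissible h n j) :
    cylinder a b n j =ᵐ[volume]
      Set.Ioo
        (∑ m ∈ Finset.range n,
          (∏ i ∈ Finset.range m, (a i (j i) : ℝ) / (b i (j i) : ℝ)) * (1 / (j m : ℝ)))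
        ((∑ m ∈ Finset.range (n - 1),
          (∏ i ∈ Finset.range m, (a i (j i) : ℝ) / (b i (j i) : ℝ)) * (1 / (j m : ℝ))) +
          (∏ i ∈ Finset.range (n - 1), (a i (j i) : ℝ) / (b i (j i) : ℝ)) *
            (1 / ((j (n - 1) : ℝ) - 1))) :=
  cylinder_ae_eq_Ioo_general a b h ha hab n hn j hadm

end ROE
end

section
/- Assume Hypothesis (H). If the symbols ξ_k are independent and identically distributed, i.e. p_k = p for all k for some fixed probability measure p on the positive integers, then the probability measure μ_ξ is singular with respect to Lebesgue measure: μ_ξ ⊥ λ. -/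
open MeasureTheory Set

namespace ROE

/-!
Lebesgue-almost every `x ∈ (0,1]` has an infinite expansion (the others are rational) whose
difference digits tend to infinity. On a digit interval `(1/d, 1/(d-1)]` the step `x_n ↦ x_{n+1}`
is an increasing affine bijection onto `(0, 1/h_n(d)]`, itself a union of digit intervals; so if a
set meets every digit interval in at most an `ε`-fraction of its length, so does its preimage
under the step, and the `x` whose `x_n` lies in such a set have measure at most `ε`. The event
`α_{n+1}(x) ≤ K` means `x_{n+1} > 1/(h_n(d_n) + K)`, i.e. `x_n` lies in a set filling the fraction
`K/(h_n(d) + K) < K l_{n+1}` (by (H)) of each digit interval `d` it meets; as `Σ l_k < ∞`,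
Borel–Cantelli applies.

On the other hand an i.i.d. sequence returns infinitely often to any value of positive
probability (second Borel–Cantelli), so it does not tend to infinity, and `Φ` inverts the
difference-digit map on sequences of positive integers. Hence `μ_ξ` lives on a Lebesgue-null set.
-/

open Filter ProbabilityTheory
open scoped ENNReal

noncomputable def digit (t : ℝ) : ℕ := (⌊1 / t⌋).toNat + 1

def digitInterval (d : ℕ) : Set ℝ := Ioc (1 / (d : ℝ)) (1 / ((d : ℝ) - 1))

noncomputable def step (a b : ℕ → ℕ → ℕ) (m : ℕ) (t : ℝ) : ℝ :=
  (b m (digit t) / a m (digit t) : ℝ) * (t - 1 / digit t)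

section Digits

variable {t : ℝ} {d H : ℕ}

theorem lt_digit_iff (hH : 1 ≤ H) : H < digit t ↔ t ∈ Ioc 0 (1 / (H : ℝ)) := by
  have hH' : (0 : ℝ) < H := by exact_mod_cast hH
  have hfloor : H < digit t ↔ (H : ℤ) ≤ ⌊1 / t⌋ := by
    unfold digit
    omega
  rw [hfloor, Int.le_floor, Int.cast_natCast, mem_Ioc]
  rcases le_or_gt t 0 with ht | ht
  · have : 1 / t ≤ 0 := one_div_nonpos.2 ht
    exact ⟨fun h => by linarith, fun h => by linarith [h.1]⟩
  · rw [le_one_div hH' ht]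
    exact ⟨fun h => ⟨ht, h⟩, And.right⟩

theorem digit_eq_iff (hd : 2 ≤ d) : digit t = d ↔ t ∈ digitInterval d := by
  have hcast : ((d - 1 : ℕ) : ℝ) = d - 1 := by rw [Nat.cast_sub (by omega), Nat.cast_one]
  have hsplit : digit t = d ↔ d - 1 < digit t ∧ ¬ d < digit t := by omega
  rw [hsplit, lt_digit_iff (by omega), lt_digit_iff (by omega), hcast]
  simp only [digitInterval, mem_Ioc, not_and, not_le]
  constructor
  · rintro ⟨⟨ht, hhi⟩, hlo⟩
    exact ⟨hlo ht, hhi⟩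
  · rintro ⟨hlo, hhi⟩
    exact ⟨⟨lt_trans (by positivity) hlo, hhi⟩, fun _ => hlo⟩

theorem two_le_digit (ht : t ∈ Ioc 0 1) : 2 ≤ digit t :=
  (lt_digit_iff le_rfl).2 (by simpa using ht)

theorem mem_digitInterval_digit (ht : t ∈ Ioc 0 1) : t ∈ digitInterval (digit t) :=
  (digit_eq_iff (two_le_digit ht)).1 rfl

theorem digitInterval_subset_Ioc (hd : 2 ≤ d) : digitInterval d ⊆ Ioc 0 1 := fun t ht => by
  simpa using (lt_digit_iff le_rfl).1 (((digit_eq_iff hd).2 ht).symm ▸ hd)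

theorem biUnion_digitInterval (hH : 1 ≤ H) :
    ⋃ d ∈ Ioi H, digitInterval d = Ioc 0 (1 / (H : ℝ)) := by
  ext t
  simp only [mem_iUnion₂, mem_Ioi, exists_prop]
  constructor
  · rintro ⟨d, hHd, ht⟩
    exact (lt_digit_iff hH).1 (((digit_eq_iff (by omega)).2 ht).symm ▸ hHd)
  · intro ht
    have hHt := (lt_digit_iff hH).2 ht
    exact ⟨digit t, hHt, (digit_eq_iff (by omega)).1 rfl⟩

theorem pairwiseDisjoint_digitInterval : (Ioi 1 : Set ℕ).PairwiseDisjoint digitInterval :=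
  fun _ hd _ he hde => Set.disjoint_left.2 fun _ htd hte =>
    hde (((digit_eq_iff hd).2 htd).symm.trans ((digit_eq_iff he).2 hte))

theorem one_div_pred_sub_one_div (hd : 2 ≤ d) :
    1 / ((d : ℝ) - 1) - 1 / d = 1 / (d * (d - 1)) := by
  have : (2 : ℝ) ≤ d := by exact_mod_cast hd
  have : (d : ℝ) - 1 ≠ 0 := by linarith
  have : (d : ℝ) ≠ 0 := by linarith
  field_simp
  ring

theorem volume_digitInterval (hd : 2 ≤ d) :
    volume (digitInterval d) = ENNReal.ofReal (1 / (d * (d - 1))) := by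
  rw [digitInterval, Real.volume_Ioc, one_div_pred_sub_one_div hd]

theorem sub_mem_Ioc_of_mem_digitInterval (hd : 2 ≤ d) (ht : t ∈ digitInterval d) :
    t - 1 / d ∈ Ioc 0 (1 / ((d : ℝ) * (d - 1))) := by
  rw [← one_div_pred_sub_one_div hd]
  exact ⟨sub_pos.2 ht.1, sub_le_sub_right ht.2 _⟩

theorem step_eq_of_mem_digitInterval {a b : ℕ → ℕ → ℕ} {m : ℕ} (hd : 2 ≤ d)
    (ht : t ∈ digitInterval d) : step a b m t = (b m d / a m d : ℝ) * (t - 1 / d) := by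
  rw [step, (digit_eq_iff hd).2 ht]

end Digits

theorem volume_preimage_mul_sub {r : ℝ} (hr : 0 < r) (c : ℝ) (W : Set ℝ) :
    volume ((fun t => r * (t - c)) ⁻¹' W) = ENNReal.ofReal r⁻¹ * volume W := by
  change volume ((· + -c) ⁻¹' ((r * ·) ⁻¹' W)) = _
  rw [measure_preimage_add_right, Real.volume_preimage_mul_left hr.ne', abs_of_pos (inv_pos.2 hr)]

theorem one_div_sub_one_div_add_le {u K c : ℝ} (hu : 0 < u) (hK : 0 ≤ K) (hc : 1 / u ≤ c) :
    1 / u - 1 / (u + K) ≤ K * c * (1 / u) := by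
  calc 1 / u - 1 / (u + K) = K * (1 / (u + K)) * (1 / u) := by
        field_simp
        ring
    _ ≤ K * c * (1 / u) := by
        gcongr
        exact (one_div_le_one_div_of_le hu (le_add_of_nonneg_right hK)).trans hc

def IsSparse (ε : ℝ≥0∞) (S : Set ℝ) : Prop :=
  ∀ d, 2 ≤ d → volume (S ∩ digitInterval d) ≤ ε * volume (digitInterval d)

theorem IsSparse.volume_inter_Ioc_le {ε : ℝ≥0∞} {S : Set ℝ} (hS : IsSparse ε S) {H : ℕ}
    (hH : 1 ≤ H) : volume (S ∩ Ioc 0 (1 / (H : ℝ))) ≤ ε * ENNReal.ofReal (1 / H) := by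
  have hdisj := pairwiseDisjoint_digitInterval.subset (Ioi_subset_Ioi hH)
  calc volume (S ∩ Ioc 0 (1 / (H : ℝ)))
      = volume (⋃ d ∈ Ioi H, S ∩ digitInterval d) := by
        rw [← biUnion_digitInterval hH, inter_iUnion₂]
    _ ≤ ∑' d : Ioi H, volume (S ∩ digitInterval d) := measure_biUnion_le _ (to_countable _) _
    _ ≤ ∑' d : Ioi H, ε * volume (digitInterval d) :=
        ENNReal.tsum_le_tsum fun d => hS d (Nat.succ_le_of_lt (lt_of_le_of_lt hH d.2))
    _ = ε * volume (Ioc 0 (1 / (H : ℝ))) := by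
        rw [ENNReal.tsum_mul_left, ← biUnion_digitInterval hH,
          measure_biUnion (to_countable _) hdisj fun _ _ => measurableSet_Ioc]
    _ = ε * ENNReal.ofReal (1 / H) := by rw [Real.volume_Ioc, sub_zero]

noncomputable def phiTerm (a b h : ℕ → ℕ → ℕ) (α : ℕ → ℕ) (n m : ℕ) : ℝ :=
  (∏ i ∈ Finset.range m, (a (n + i) (dSeq h α (n + i)) / b (n + i) (dSeq h α (n + i)) : ℝ)) *
    (1 / dSeq h α (n + m))

noncomputable def phiTail (a b h : ℕ → ℕ → ℕ) (α : ℕ → ℕ) (n : ℕ) : ℝ :=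
  ∑' m, phiTerm a b h α n m

section PhiTail

variable {a b h : ℕ → ℕ → ℕ} {α : ℕ → ℕ}

theorem phiTerm_zero (n : ℕ) :
    phiTerm a b h α n 0 = 1 / dSeq h α n := by
  simp [phiTerm]

theorem phiTerm_succ (n m : ℕ) :
    phiTerm a b h α n (m + 1) =
      (a n (dSeq h α n) / b n (dSeq h α n) : ℝ) * phiTerm a b h α (n + 1) m := by
  simp only [phiTerm, Finset.prod_range_succ', add_zero, add_assoc, add_comm 1]
  ring

theorem phiTerm_nonneg (n m : ℕ) : 0 ≤ phiTerm a b h α n m := by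
  unfold phiTerm
  positivity

theorem Phi_eq_phiTail : Phi a b h α = phiTail a b h α 0 := by
  simp [Phi, phiTail, phiTerm]

end PhiTail

structure IsROEData (a b h : ℕ → ℕ → ℕ) : Prop where
  a_pos : ∀ k j, 2 ≤ j → 0 < a k j
  mul_eq : ∀ k j, 2 ≤ j → b k j * h k j = a k j * j * (j - 1)

namespace IsROEData

variable {a b h : ℕ → ℕ → ℕ} (hR : IsROEData a b h) {k e : ℕ}
include hR

theorem b_pos_and_h_pos (he : 2 ≤ e) : 0 < b k e ∧ 0 < h k e := by
  have : 0 < b k e * h k e := by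
    rw [hR.mul_eq k e he]
    exact Nat.mul_pos (Nat.mul_pos (hR.a_pos k e he) (by omega)) (by omega)
  exact ⟨Nat.pos_of_mul_pos_right this, Nat.pos_of_mul_pos_left this⟩

theorem cast_mul_eq (he : 2 ≤ e) : (b k e : ℝ) * h k e = a k e * e * (e - 1) := by
  have := congrArg (Nat.cast : ℕ → ℝ) (hR.mul_eq k e he)
  push_cast [Nat.cast_sub (by omega : 1 ≤ e)] at this
  exact this

theorem div_mul_eq_one_div_h (he : 2 ≤ e) :
    (b k e / a k e : ℝ) * (1 / (e * (e - 1))) = 1 / h k e := by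
  obtain ⟨hb, hh⟩ := hR.b_pos_and_h_pos (k := k) he
  have ha : (0 : ℝ) < a k e := by exact_mod_cast hR.a_pos k e he
  have : (2 : ℝ) ≤ e := by exact_mod_cast he
  have : (0 : ℝ) < e - 1 := by linarith
  rw [div_mul_div_comm, div_eq_div_iff (by positivity) (by positivity)]
  linear_combination hR.cast_mul_eq he

theorem one_div_h_eq (he : 2 ≤ e) : 1 / (h k e : ℝ) = b k e / (a k e * e * (e - 1)) := by
  rw [← hR.div_mul_eq_one_div_h he, div_mul_div_comm, mul_one, mul_assoc]

theorem div_mul_one_div_h (he : 2 ≤ e) :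
    (a k e / b k e : ℝ) * (1 / h k e) = 1 / (e * (e - 1)) := by
  obtain ⟨hb, -⟩ := hR.b_pos_and_h_pos (k := k) he
  have ha : (0 : ℝ) < a k e := by exact_mod_cast hR.a_pos k e he
  rw [← hR.div_mul_eq_one_div_h he, ← mul_assoc, div_mul_div_cancel₀ (by positivity),
    div_self (by positivity), one_mul]

theorem step_mem_Ioc {m d : ℕ} {t : ℝ} (hd : 2 ≤ d) (ht : t ∈ digitInterval d) :
    step a b m t ∈ Ioc 0 (1 / (h m d : ℝ)) := by
  obtain ⟨hb, -⟩ := hR.b_pos_and_h_pos (k := m) hd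
  have ha : (0 : ℝ) < a m d := by exact_mod_cast hR.a_pos m d hd
  obtain ⟨hpos, hle⟩ := sub_mem_Ioc_of_mem_digitInterval hd ht
  rw [step_eq_of_mem_digitInterval hd ht, ← hR.div_mul_eq_one_div_h hd]
  exact ⟨by positivity, by gcongr⟩

theorem X_mem_Ioc {x : ℝ} (hx : x ∈ Ioc 0 1) (n : ℕ) : X a b x n ∈ Ioc 0 1 := by
  induction n with
  | zero => exact hx
  | succ n ih =>
    have hd := two_le_digit ih
    have hh : 1 ≤ h n (digit (X a b x n)) := (hR.b_pos_and_h_pos hd).2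
    obtain ⟨hpos, hle⟩ := hR.step_mem_Ioc hd (mem_digitInterval_digit ih)
    exact ⟨hpos, hle.trans (div_le_one_of_le₀ (by exact_mod_cast hh) (by positivity))⟩

theorem mem_range_ratCast_of_step {m : ℕ} {t : ℝ} (ht : t ∈ Ioc 0 1)
    (hs : step a b m t ∈ range ((↑) : ℚ → ℝ)) : t ∈ range ((↑) : ℚ → ℝ) := by
  obtain ⟨q, hq⟩ := hs
  have hd := two_le_digit ht
  obtain ⟨hb, -⟩ := hR.b_pos_and_h_pos (k := m) hd
  have ha : (0 : ℝ) < a m (digit t) := by exact_mod_cast hR.a_pos m _ hd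
  have : (2 : ℝ) ≤ digit t := by exact_mod_cast hd
  refine ⟨a m (digit t) / b m (digit t) * q + 1 / digit t, ?_⟩
  push_cast
  rw [hq, step]
  field_simp
  ring

theorem countable_not_infiniteROE : {x : ℝ | x ∈ Ioc 0 1 ∧ ¬ InfiniteROE a b x}.Countable := by
  refine (countable_range ((↑) : ℚ → ℝ)).mono ?_
  rintro x ⟨hx, hfin⟩
  obtain ⟨n, hn⟩ := not_forall.1 hfin
  have hXn : X a b x n = 1 := by
    obtain ⟨h0, h1⟩ := hR.X_mem_Ioc hx n
    exact h1.eq_or_lt.resolve_right fun h1 => hn ⟨h0, h1⟩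
  suffices ∀ n, X a b x n ∈ range ((↑) : ℚ → ℝ) → x ∈ range ((↑) : ℚ → ℝ) from
    this n ⟨1, by rw [hXn, Rat.cast_one]⟩
  intro n
  induction n with
  | zero => exact id
  | succ n ih => exact fun hs => ih (hR.mem_range_ratCast_of_step (hR.X_mem_Ioc hx n) hs)

theorem isSparse_preimage_step {ε : ℝ≥0∞} {S : Set ℝ} (hS : IsSparse ε S) (m : ℕ) :
    IsSparse ε (step a b m ⁻¹' S) := by
  intro d hd
  obtain ⟨hb, hh⟩ := hR.b_pos_and_h_pos (k := m) hd
  have ha : (0 : ℝ) < a m d := by exact_mod_cast hR.a_pos m d hd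
  set r : ℝ := b m d / a m d
  have hr : 0 < r := by positivity
  have hsub : step a b m ⁻¹' S ∩ digitInterval d ⊆
      (fun t => r * (t - 1 / d)) ⁻¹' (S ∩ Ioc 0 (1 / (h m d : ℝ))) := by
    rintro t ⟨htS, ht⟩
    rw [mem_preimage, ← step_eq_of_mem_digitInterval hd ht]
    exact ⟨htS, hR.step_mem_Ioc hd ht⟩
  calc volume (step a b m ⁻¹' S ∩ digitInterval d)
      ≤ ENNReal.ofReal r⁻¹ * volume (S ∩ Ioc 0 (1 / (h m d : ℝ))) :=
        (measure_mono hsub).trans (volume_preimage_mul_sub hr _ _).le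
    _ ≤ ENNReal.ofReal r⁻¹ * (ε * ENNReal.ofReal (1 / (h m d : ℝ))) := by
        gcongr
        exact hS.volume_inter_Ioc_le hh
    _ = ε * volume (digitInterval d) := by
        rw [volume_digitInterval hd, ← hR.div_mul_one_div_h hd, inv_div,
          ENNReal.ofReal_mul (by positivity)]
        ring

theorem volume_X_mem_le {ε : ℝ≥0∞} {S : Set ℝ} (hS : IsSparse ε S) (m : ℕ) :
    volume {x | x ∈ Ioc 0 1 ∧ X a b x m ∈ S} ≤ ε := by
  induction m generalizing S with
  | zero =>
    have h1 := hS.volume_inter_Ioc_le le_rfl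
    rwa [Nat.cast_one, div_one, ENNReal.ofReal_one, mul_one, inter_comm] at h1
  | succ m ih => exact ih (hR.isSparse_preimage_step hS m)

theorem isSparse_next_digit_le {m K : ℕ} {c : ℝ} :
    IsSparse (K * ENNReal.ofReal c)
      {t | 1 / (h m (digit t) : ℝ) < c ∧ 1 / ((h m (digit t) : ℝ) + K) < step a b m t} := by
  intro d hd
  obtain ⟨hb, hh⟩ := hR.b_pos_and_h_pos (k := m) hd
  have ha : (0 : ℝ) < a m d := by exact_mod_cast hR.a_pos m d hd
  have hh' : (0 : ℝ) < h m d := by exact_mod_cast hh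
  obtain hdc | hdc := le_or_gt c (1 / (h m d : ℝ))
  · refine (measure_mono_null (t := ∅) ?_ measure_empty).trans_le zero_le
    rintro t ⟨⟨hc, -⟩, ht⟩
    rw [(digit_eq_iff hd).2 ht] at hc
    exact absurd hc hdc.not_gt
  set r : ℝ := b m d / a m d
  have hr : 0 < r := by positivity
  have hsub : {t | 1 / (h m (digit t) : ℝ) < c ∧ 1 / ((h m (digit t) : ℝ) + K) < step a b m t}
      ∩ digitInterval d ⊆
        (fun t => r * (t - 1 / d)) ⁻¹' Ioc (1 / ((h m d : ℝ) + K)) (1 / h m d) := by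
    rintro t ⟨⟨-, hlo⟩, ht⟩
    rw [(digit_eq_iff hd).2 ht] at hlo
    rw [mem_preimage, ← step_eq_of_mem_digitInterval hd ht]
    exact ⟨hlo, (hR.step_mem_Ioc hd ht).2⟩
  have hc : 0 ≤ c := le_trans (by positivity) hdc.le
  calc _ ≤ ENNReal.ofReal r⁻¹ * volume (Ioc (1 / ((h m d : ℝ) + K)) (1 / h m d)) :=
        (measure_mono hsub).trans (volume_preimage_mul_sub hr _ _).le
    _ ≤ ENNReal.ofReal r⁻¹ * ENNReal.ofReal (K * c * (1 / h m d)) := by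
        rw [Real.volume_Ioc]
        gcongr
        exact one_div_sub_one_div_add_le hh' K.cast_nonneg hdc.le
    _ = K * ENNReal.ofReal c * volume (digitInterval d) := by
        rw [volume_digitInterval hd, ← hR.div_mul_one_div_h hd, inv_div, ← ENNReal.ofReal_natCast,
          ← ENNReal.ofReal_mul (by positivity), ← ENNReal.ofReal_mul (by positivity),
          ← ENNReal.ofReal_mul (by positivity)]
        ring_nf

theorem volume_alpha_succ_le {m K : ℕ} {c : ℝ}
    (hc : ∀ x, InfiniteROE a b x → 1 / (h m (D a b x m) : ℝ) < c) :
    volume {x | x ∈ Ioc 0 1 ∧ InfiniteROE a b x ∧ alpha a b h x (m + 1) ≤ K}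
      ≤ K * ENNReal.ofReal c := by
  refine le_trans (measure_mono ?_) (hR.volume_X_mem_le (hR.isSparse_next_digit_le (m := m)) m)
  rintro x ⟨hx, hinf, hK⟩
  refine ⟨hx, hc x hinf, ?_⟩
  have hnext : D a b x (m + 1) ≤ h m (D a b x m) + K := by
    simp only [alpha] at hK
    omega
  have hpos : (0 : ℝ) < D a b x (m + 1) := by
    exact_mod_cast (two_le_digit (Ioo_subset_Ioc_self (hinf (m + 1)))).trans_lt' two_pos
  calc 1 / ((h m (D a b x m) : ℝ) + K) ≤ 1 / (D a b x (m + 1) : ℝ) :=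
        one_div_le_one_div_of_le hpos (by exact_mod_cast hnext)
    _ < X a b x (m + 1) := (mem_digitInterval_digit (Ioo_subset_Ioc_self (hinf (m + 1)))).1

theorem ae_tendsto_alpha {c : ℕ → ℝ} (hsum : Summable c)
    (hc : ∀ x, InfiniteROE a b x → ∀ m, 1 / (h m (D a b x m) : ℝ) < c m) :
    ∀ᵐ x, x ∈ Ioc (0 : ℝ) 1 → Tendsto (alpha a b h x) atTop atTop := by
  have hinf : ∀ᵐ x, x ∈ Ioc (0 : ℝ) 1 → InfiniteROE a b x := ae_iff.2 <| by
    simpa only [Classical.not_imp] using hR.countable_not_infiniteROE.measure_zero volume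
  have hsmall : ∀ K : ℕ, ∀ᵐ x, ∀ᶠ m in atTop,
      x ∉ {x | x ∈ Ioc 0 1 ∧ InfiniteROE a b x ∧ alpha a b h x (m + 1) ≤ K} := by
    intro K
    refine ae_eventually_notMem (ne_top_of_le_ne_top ?_ (ENNReal.tsum_le_tsum fun m =>
      hR.volume_alpha_succ_le fun x hx => hc x hx m))
    rw [ENNReal.tsum_mul_left]
    exact ENNReal.mul_ne_top (ENNReal.natCast_ne_top K)
      (ENNReal.tsum_coe_ne_top_iff_summable.2 hsum.toNNReal)
  filter_upwards [hinf, ae_all_iff.2 hsmall] with x hxinf hx hxI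
  rw [← tendsto_add_atTop_iff_nat 1, tendsto_atTop]
  intro K
  filter_upwards [hx K] with m hm
  by_contra! hlt
  exact hm ⟨hxI, hxinf hxI, hlt.le⟩

section Phi

variable {α : ℕ → ℕ} (hα : ∀ k, 1 ≤ α k)
include hα

theorem two_le_dSeq (n : ℕ) : 2 ≤ dSeq h α n := by
  induction n with
  | zero => simpa [dSeq] using hα 0
  | succ n ih =>
    have := (hR.b_pos_and_h_pos (k := n) ih).2
    have := hα (n + 1)
    simp only [dSeq]
    omega

theorem sum_phiTerm_le (N : ℕ) :
    ∀ n, ∑ m ∈ Finset.range N, phiTerm a b h α n m ≤ 1 / ((dSeq h α n : ℝ) - 1) := by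
  induction N with
  | zero =>
    intro n
    have : (2 : ℝ) ≤ dSeq h α n := by exact_mod_cast hR.two_le_dSeq hα n
    rw [Finset.sum_range_zero, one_div_nonneg]
    linarith
  | succ N ih =>
    intro n
    have hd := hR.two_le_dSeq hα n
    obtain ⟨hb, hh⟩ := hR.b_pos_and_h_pos (k := n) hd
    have hnext : (h n (dSeq h α n) : ℝ) ≤ dSeq h α (n + 1) - 1 := by
      have : h n (dSeq h α n) + 1 ≤ dSeq h α (n + 1) := by
        simp only [dSeq]
        have := hα (n + 1)
        omega
      have : ((h n (dSeq h α n) + 1 : ℕ) : ℝ) ≤ dSeq h α (n + 1) := by exact_mod_cast this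
      push_cast at this
      linarith
    calc ∑ m ∈ Finset.range (N + 1), phiTerm a b h α n m
        = 1 / dSeq h α n + (a n (dSeq h α n) / b n (dSeq h α n) : ℝ) *
            ∑ m ∈ Finset.range N, phiTerm a b h α (n + 1) m := by
          rw [Finset.sum_range_succ', phiTerm_zero, Finset.mul_sum, add_comm]
          simp only [phiTerm_succ]
      _ ≤ 1 / dSeq h α n + (a n (dSeq h α n) / b n (dSeq h α n) : ℝ) *
            (1 / h n (dSeq h α n)) := by
          gcongr
          exact (ih (n + 1)).trans (one_div_le_one_div_of_le (by exact_mod_cast hh) hnext)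
      _ = 1 / ((dSeq h α n : ℝ) - 1) := by
          rw [hR.div_mul_one_div_h hd, ← one_div_pred_sub_one_div hd]
          ring

theorem summable_phiTerm (n : ℕ) : Summable (phiTerm a b h α n) :=
  summable_of_sum_range_le (phiTerm_nonneg n) fun N => hR.sum_phiTerm_le hα N n

theorem phiTail_eq (n : ℕ) :
    phiTail a b h α n =
      1 / dSeq h α n + (a n (dSeq h α n) / b n (dSeq h α n) : ℝ) * phiTail a b h α (n + 1) := by
  rw [phiTail, (hR.summable_phiTerm hα n).tsum_eq_zero_add, phiTerm_zero, phiTail,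
    ← tsum_mul_left]
  simp only [phiTerm_succ]

theorem phiTail_mem_digitInterval (n : ℕ) : phiTail a b h α n ∈ digitInterval (dSeq h α n) := by
  have hd := hR.two_le_dSeq hα n
  obtain ⟨hb, -⟩ := hR.b_pos_and_h_pos (k := n) hd
  have ha : (0 : ℝ) < a n (dSeq h α n) := by exact_mod_cast hR.a_pos _ _ hd
  refine ⟨?_, Real.tsum_le_of_sum_range_le (phiTerm_nonneg n) fun N => hR.sum_phiTerm_le hα N n⟩
  rw [hR.phiTail_eq hα n]
  have hfirst : 0 < phiTail a b h α (n + 1) := by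
    have := hR.two_le_dSeq hα (n + 1)
    calc (0 : ℝ) < phiTerm a b h α (n + 1) 0 := by rw [phiTerm_zero]; positivity
      _ ≤ phiTail a b h α (n + 1) :=
        (hR.summable_phiTerm hα (n + 1)).le_tsum 0 fun m _ => phiTerm_nonneg _ m
  have : 0 < (a n (dSeq h α n) / b n (dSeq h α n) : ℝ) * phiTail a b h α (n + 1) := by positivity
  linarith

theorem X_Phi (n : ℕ) : X a b (Phi a b h α) n = phiTail a b h α n := by
  induction n with
  | zero => exact Phi_eq_phiTail
  | succ n ih =>
    have hd := hR.two_le_dSeq hα n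
    obtain ⟨hb, -⟩ := hR.b_pos_and_h_pos (k := n) hd
    have ha : (0 : ℝ) < a n (dSeq h α n) := by exact_mod_cast hR.a_pos _ _ hd
    change step a b n _ = _
    rw [ih, step_eq_of_mem_digitInterval hd (hR.phiTail_mem_digitInterval hα n),
      hR.phiTail_eq hα n]
    field_simp
    ring

theorem D_Phi (n : ℕ) : D a b (Phi a b h α) n = dSeq h α n :=
  (digit_eq_iff (hR.two_le_dSeq hα n)).2 (hR.X_Phi hα n ▸ hR.phiTail_mem_digitInterval hα n)

theorem alpha_Phi : alpha a b h (Phi a b h α) = α := by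
  funext k
  cases k with
  | zero => simp [alpha, hR.D_Phi hα, dSeq]
  | succ k => simp [alpha, hR.D_Phi hα, dSeq]

theorem Phi_mem_Ioc : Phi a b h α ∈ Ioc 0 1 :=
  digitInterval_subset_Ioc (hR.two_le_dSeq hα 0)
    (Phi_eq_phiTail ▸ hR.phiTail_mem_digitInterval hα 0)

end Phi

end IsROEData

theorem ae_not_tendsto_atTop_of_iIndepFun {Ω : Type*} [MeasurableSpace Ω] {μ : Measure Ω}
    [IsProbabilityMeasure μ] {ξ : ℕ → Ω → ℕ} {p : Measure ℕ} [IsProbabilityMeasure p]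
    (hξ : ∀ k, Measurable (ξ k)) (hlaw : ∀ k, μ.map (ξ k) = p) (hind : iIndepFun ξ μ) :
    ∀ᵐ ω ∂μ, ¬ Tendsto (fun k => ξ k ω) atTop atTop := by
  obtain ⟨v, hv⟩ : ∃ v, p {v} ≠ 0 := by
    by_contra! h
    have : p univ = 0 := by rw [← iUnion_of_singleton]; exact measure_iUnion_null h
    simp at this
  set s : ℕ → Set Ω := fun k => ξ k ⁻¹' {v}
  have hs : ∀ k, MeasurableSet (s k) := fun k => hξ k (measurableSet_singleton v)
  have hsv : ∀ k, μ (s k) = p {v} := fun k => by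
    rw [← hlaw k, Measure.map_apply (hξ k) (measurableSet_singleton v)]
  have hindep : iIndepSet s μ := (iIndepSet_iff_meas_biInter hs).2 fun t =>
    hind.measure_inter_preimage_eq_mul t fun _ _ => measurableSet_singleton v
  have hlimsup : μ (limsup s atTop) = 1 := by
    refine measure_limsup_eq_one hs hindep ?_
    simp only [hsv]
    exact ENNReal.tsum_const_eq_top_of_ne_zero hv
  have hfreq : ∀ᵐ ω ∂μ, ω ∈ limsup s atTop :=
    (ae_iff_measure_eq (MeasurableSet.measurableSet_limsup hs).nullMeasurableSet).2 <| by
      rwa [measure_univ]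
  filter_upwards [hfreq] with ω hω htend
  rw [mem_limsup_iff_frequently_mem] at hω
  obtain ⟨k, hk, hlt⟩ := (hω.and_eventually (htend.eventually_gt_atTop v)).exists
  exact hlt.ne' hk

theorem measurable_dSeq (h : ℕ → ℕ → ℕ) (n : ℕ) : Measurable fun α : ℕ → ℕ => dSeq h α n := by
  induction n with
  | zero => exact (measurable_pi_apply 0).add_const 1
  | succ n ih =>
    exact (measurable_of_countable fun q : ℕ × ℕ => h n q.1 + q.2).comp
      (ih.prodMk (measurable_pi_apply (n + 1)))

theorem measurable_Phi (a b h : ℕ → ℕ → ℕ) : Measurable (Phi a b h) := by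
  have hd := measurable_dSeq h
  refine Measurable.tsum fun n => Measurable.mul ?_ ?_
  · exact Finset.measurable_prod _ fun i _ =>
      (measurable_of_countable fun d => (a i d / b i d : ℝ)).comp (hd i)
  · exact (measurable_of_countable fun d : ℕ => (1 / d : ℝ)).comp (hd n)

theorem singular_of_iid_general (a b h : ℕ → ℕ → ℕ)
    (ha : ∀ k j, 2 ≤ j → 0 < a k j)
    (hab : ∀ k j, 2 ≤ j → b k j * h k j = a k j * j * (j - 1))
    (l : ℕ → ℝ)
    (hlsum : Summable fun m : ℕ => l (m + 2))
    (hH : ∀ x : ℝ, InfiniteROE a b x → ∀ m : ℕ,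
      (b m (D a b x m) : ℝ) /
          ((a m (D a b x m) : ℝ) * (D a b x m : ℝ) * ((D a b x m : ℝ) - 1)) < l (m + 2))
    (p : Measure ℕ) [IsProbabilityMeasure p] (hp0 : p {0} = 0)
    (P : Measure (ℕ → ℕ)) [IsProbabilityMeasure P]
    (hlaw : ∀ k : ℕ, P.map (fun α => α k) = p)
    (hindep : ProbabilityTheory.iIndepFun
      (fun k (α : ℕ → ℕ) => α k) P) :
    (P.map (Phi a b h)).MutuallySingular volume := by
  have hR : IsROEData a b h := ⟨ha, hab⟩
  have hleb : ∀ᵐ x, x ∈ Ioc (0 : ℝ) 1 → Tendsto (alpha a b h x) atTop atTop :=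
    hR.ae_tendsto_alpha hlsum fun x hx m =>
      (hR.one_div_h_eq (two_le_digit (Ioo_subset_Ioc_self (hx m)))).trans_lt (hH x hx m)
  have hpos : ∀ᵐ α ∂P, ∀ k, 1 ≤ α k := ae_all_iff.2 fun k => by
    have : ∀ᵐ n ∂p, 1 ≤ n := ae_iff.2 (by simpa [Nat.lt_one_iff] using hp0)
    exact ae_of_ae_map (measurable_pi_apply k).aemeasurable (hlaw k ▸ this)
  have hnot := ae_not_tendsto_atTop_of_iIndepFun measurable_pi_apply hlaw hindep
  obtain ⟨t, hsub, ht, hnull⟩ := exists_measurable_superset_of_null (ae_iff.1 hleb)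
  refine ⟨tᶜ, ht.compl, ?_, by rwa [compl_compl]⟩
  rw [Measure.map_apply (measurable_Phi a b h) ht.compl]
  refine ae_iff.1 ?_
  filter_upwards [hpos, hnot] with α hα hα'
  refine hsub fun htend => hα' ?_
  simpa only [hR.alpha_Phi hα] using htend (hR.Phi_mem_Ioc hα)

/-- Assume Hypothesis (H).  If the difference-ROE symbols `ξ_k` are independent
and identically distributed (all laws equal to a fixed probability measure `p` on the positive
integers), then the distribution `μ_ξ = Φ_*P` is singular with respect to Lebesgue measure. -/
theorem singular_of_iid (a b h : ℕ → ℕ → ℕ)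
    (ha : ∀ k j, 2 ≤ j → 0 < a k j) (hb : ∀ k j, 2 ≤ j → 0 < b k j)
    (hpos : ∀ k j, 2 ≤ j → 0 < h k j)
    (hab : ∀ k j, 2 ≤ j → b k j * h k j = a k j * j * (j - 1))
    (l : ℕ → ℝ) (hlpos : ∀ k, 2 ≤ k → 0 < l k)
    (hlsum : Summable fun m : ℕ => l (m + 2))
    (hH : ∀ x : ℝ, InfiniteROE a b x → ∀ m : ℕ,
      (b m (D a b x m) : ℝ) /
          ((a m (D a b x m) : ℝ) * (D a b x m : ℝ) * ((D a b x m : ℝ) - 1)) < l (m + 2))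
    (p : Measure ℕ) [IsProbabilityMeasure p] (hp0 : p {0} = 0)
    (P : Measure (ℕ → ℕ)) [IsProbabilityMeasure P]
    (hlaw : ∀ k : ℕ, P.map (fun α => α k) = p)
    (hindep : ProbabilityTheory.iIndepFun
      (fun k (α : ℕ → ℕ) => α k) P) :
    (P.map (Phi a b h)).MutuallySingular volume :=
  singular_of_iid_general a b h ha hab l hlsum hH p hp0 P hlaw hindep

end ROE
end
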